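/- Under the box P(a,b,c|x,y,z) = 1/2 if a = b ⊕ xy and c = b ⊕ zy, and 0 otherwise (binary variables), both the Alice-Bob marginal and the Bob-Charlie marginal equal the Popescu-Rohrlich box: Σ_c P(a,b,c|x,y,z) = 1/2 if a ⊕ b = xy (else 0), and Σ_a P(a,b,c|x,y,z) = 1/2 if b ⊕ c = zy (else 0). Consequently both pairs A-B and B-C achieve CHSH value 4 simultaneously. -/

import Mathlib

noncomputable def doublePRBox (a b c x y z : ZMod 2) : ℝ :=
  if a = b + x * y ∧ c = b + z * y then 1 / 2 else 0

noncomputable def sgn (t : ZMod 2) : ℝ := if t = 0 then 1 else -1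

noncomputable def chshValue (Q : ZMod 2 → ZMod 2 → ZMod 2 → ZMod 2 → ℝ) : ℝ :=
  ∑ x : ZMod 2, ∑ y : ZMod 2, sgn (x * y) *
    ∑ a : ZMod 2, ∑ b : ZMod 2, sgn (a + b) * Q a b x y

lemma sum_zmod2 (f : ZMod 2 → ℝ) : ∑ i : ZMod 2, f i = f 0 + f 1 := by
  rw [show (Finset.univ : Finset (ZMod 2)) = {0, 1} from by decide]
  rw [Finset.sum_insert (by decide), Finset.sum_singleton]

lemma marg1 (a b x y z : ZMod 2) :
    ∑ c : ZMod 2, doublePRBox a b c x y z = if a + b = x * y then 1 / 2 else 0 := by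
  simp only [doublePRBox, sum_zmod2]
  fin_cases a <;> fin_cases b <;> fin_cases x <;> fin_cases y <;> fin_cases z <;>
    simp (config := { decide := true }) <;> first | rfl | (intro h; cases h)

lemma marg2 (b c x y z : ZMod 2) :
    ∑ a : ZMod 2, doublePRBox a b c x y z = if b + c = z * y then 1 / 2 else 0 := by
  simp only [doublePRBox, sum_zmod2]
  fin_cases b <;> fin_cases c <;> fin_cases x <;> fin_cases y <;> fin_cases z <;>
    simp (config := { decide := true }) <;> first | rfl | (intro h; cases h)

lemma chsh_PR : chshValue (fun a b x y => if a + b = x * y then 1 / 2 else 0) = 4 := by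
  simp only [chshValue, sgn, sum_zmod2]
  norm_num [show ((0:ZMod 2) + 0 = 0) from rfl, show ((0:ZMod 2) + 1 ≠ 0) from by decide,
    show ((1:ZMod 2) + 0 ≠ 0) from by decide, show ((1:ZMod 2) + 1 = 0) from by decide,
    show ((1:ZMod 2) * 1 ≠ 0) from by decide]
  simp (config := { decide := true })
  norm_num

/-- Both the A-B and B-C marginals of the double-PR box are PR boxes, and hence both
pairs achieve CHSH value 4 simultaneously. -/
theorem doublePRBox_marginals_PR :
    (∀ a b x y z : ZMod 2,
      ∑ c : ZMod 2, doublePRBox a b c x y z =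
        if a + b = x * y then 1 / 2 else 0) ∧
    (∀ b c x y z : ZMod 2,
      ∑ a : ZMod 2, doublePRBox a b c x y z =
        if b + c = z * y then 1 / 2 else 0) ∧
    (∀ z : ZMod 2,
      chshValue (fun a b x y => ∑ c : ZMod 2, doublePRBox a b c x y z) = 4) ∧
    (∀ x : ZMod 2,
      chshValue (fun b c y z => ∑ a : ZMod 2, doublePRBox a b c x y z) = 4) := by
  refine ⟨marg1, marg2, ?_, ?_⟩
  · intro z
    simp only [marg1]
    exact chsh_PR
  · intro x
    have : ∀ b c y z : ZMod 2, ∑ a : ZMod 2, doublePRBox a b c x y z =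
        if b + c = z * y then 1 / 2 else 0 := fun b c y z => marg2 b c x y z
    simp only [this]
    have h : (fun (b c y z : ZMod 2) => if b + c = z * y then (1:ℝ) / 2 else 0) =
        fun b c y z => if b + c = y * z then 1 / 2 else 0 := by
      funext b c y z; rw [mul_comm]
    rw [h]
    exact chsh_PR
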